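/- arXiv:2412.20103 — 11 statements merged into one kernel-verified Lean document; each statement's English description precedes it below -/
import Mathlib

section
/- Let (A, ·_A, ρ_A) be a left-symmetric algebroid and h a symmetric 2-section. The bracket α ·^{h♯} β := L^A_{h♯α}β − R_{h♯β}α − d_A(h(α,β)) satisfies h♯(α·^{h♯}β) − h♯α ·_A h♯β = ⟦h,h⟧_A(α, ·, β), i.e. ⟨h♯(α·^{h♯}β) − h♯α·_A h♯β, γ⟩ = ⟦h,h⟧_A(α,γ,β) for all cosections α, β, γ. -/
/-- The bracket `⟦h,h⟧_A` of a symmetric 2-section `h` on a left-symmetric algebroid,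
evaluated on three cosections:
`⟦h,h⟧_A(α,β,γ) = ρ(h♯α)h(β,γ) − ρ(h♯β)h(α,γ) + ⟨α, h♯β·h♯γ⟩ − ⟨β, h♯α·h♯γ⟩ − ⟨γ,[h♯α,h♯β]⟩`. -/
def BBr {R ΓA ΓAd : Type*} [CommRing R] [AddCommGroup ΓA]
    (dot : ΓA → ΓA → ΓA) (ρ : ΓA → R → R)
    (pair : ΓAd → ΓA → R) (h : ΓAd → ΓAd → R) (hs : ΓAd → ΓA) :
    ΓAd → ΓAd → ΓAd → R :=
  fun α β γ =>
    ρ (hs α) (h β γ) - ρ (hs β) (h α γ)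
      + pair α (dot (hs β) (hs γ)) - pair β (dot (hs α) (hs γ))
      - pair γ (dot (hs α) (hs β) - dot (hs β) (hs α))

/-- Algebraic model: `(ΓA, dot, ρ)` a left-symmetric algebroid over `R = C^∞(M)`, `ΓAd` the
cosections with pairing `pair`, `h` a symmetric 2-section with induced map `h♯ = hs`,
and `dotd = ·^{h♯}` the product `α·^{h♯}β = L^A_{h♯α}β − R_{h♯β}α − d_A(h(α,β))` on cosections,
given by its defining pairing property. Conclusion:
`⟨h♯(α·^{h♯}β) − h♯α·_A h♯β, γ⟩ = ⟦h,h⟧_A(α,γ,β)` for all cosections `α β γ`. -/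
theorem stmt5
    (R : Type*) [CommRing R] (ΓA : Type*) [AddCommGroup ΓA] [Module R ΓA]
    (ΓAd : Type*) [AddCommGroup ΓAd] [Module R ΓAd]
    (dot : ΓA → ΓA → ΓA) (ρ : ΓA → R → R)
    (pair : ΓAd → ΓA → R) (h : ΓAd → ΓAd → R) (hs : ΓAd → ΓA)
    (dotd : ΓAd → ΓAd → ΓAd)
    -- anchor axioms
    (hρ_add : ∀ X f g, ρ X (f + g) = ρ X f + ρ X g)
    (hρ_mul : ∀ X f g, ρ X (f * g) = f * ρ X g + g * ρ X f)
    (hρ_addX : ∀ X Y g, ρ (X + Y) g = ρ X g + ρ Y g)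
    (hρ_smul : ∀ (f : R) X g, ρ (f • X) g = f * ρ X g)
    -- left-symmetric algebroid axioms
    (hdot_addl : ∀ X Y Z, dot (X + Y) Z = dot X Z + dot Y Z)
    (hdot_addr : ∀ X Y Z, dot X (Y + Z) = dot X Y + dot X Z)
    (hdot_smull : ∀ (f : R) X Y, dot (f • X) Y = f • dot X Y)
    (hdot_smulr : ∀ (f : R) X Y, dot X (f • Y) = f • dot X Y + ρ X f • Y)
    (hlsym : ∀ X Y Z, dot (dot X Y) Z - dot X (dot Y Z) = dot (dot Y X) Z - dot Y (dot X Z))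
    -- pairing axioms
    (hpair_addl : ∀ α β X, pair (α + β) X = pair α X + pair β X)
    (hpair_addr : ∀ α X Y, pair α (X + Y) = pair α X + pair α Y)
    (hpair_smull : ∀ (f : R) α X, pair (f • α) X = f * pair α X)
    (hpair_smulr : ∀ (f : R) α X, pair α (f • X) = f * pair α X)
    -- h symmetric with induced map h♯
    (hsym : ∀ α β, h α β = h β α)
    (hhs : ∀ α β, pair α (hs β) = h α β)
    (hhs_add : ∀ α β, hs (α + β) = hs α + hs β)
    (hhs_smul : ∀ (f : R) α, hs (f • α) = f • hs α)
    -- defining property of α·^{h♯}β = L^A_{h♯α}β − R_{h♯β}α − d_A(h(α,β))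
    (hdotd : ∀ α β Y, pair (dotd α β) Y
        = ρ (hs α) (pair β Y) - pair β (dot (hs α) Y - dot Y (hs α))
          + pair α (dot Y (hs β)) - ρ Y (h α β)) :
    ∀ α β γ, pair γ (hs (dotd α β) - dot (hs α) (hs β))
      = BBr dot ρ pair h hs α γ β := by
  intro α β γ
  have hsub : ∀ δ X Y, pair δ (X - Y) = pair δ X - pair δ Y := by
    intro δ X Y
    have h1 := hpair_addr δ (X - Y) Y
    rw [sub_add_cancel] at h1
    linear_combination -h1
  have key : pair γ (hs (dotd α β)) = pair (dotd α β) (hs γ) := by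
    rw [hhs, hsym, ← hhs]
  rw [hsub, key, hdotd, BBr, hhs, hsym β γ]
  ring
end

section
/- Let ((A,·_A,ρ_A), φ₀) be a Jacobi-left-symmetric algebroid and h ∈ Γ(S²A). Define ⟦h,h⟧_A^{φ₀}(α,β,γ) := ⟦h,h⟧_A(α,β,γ) + h(φ₀,α)h(β,γ) − h(φ₀,β)h(α,γ) and α·^{h♯,φ₀}γ := α·^{h♯}γ + ⟨φ₀,h♯α⟩γ − h(α,γ)φ₀. Then ⟦h,h⟧_A^{φ₀}(α,β,γ) = ⟨h♯(α·^{h♯,φ₀}γ) − h♯α ·_A h♯γ, β⟩ for all α, β, γ ∈ Γ(A*). -/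
/-- The twisted product `α ·^{h♯,φ₀} β := α ·^{h♯} β + ⟨φ₀,h♯α⟩β − h(α,β)φ₀`. -/
def dotdPhi {R ΓA ΓAd : Type*} [CommRing R] [AddCommGroup ΓAd] [Module R ΓAd]
    (dotd : ΓAd → ΓAd → ΓAd) (pair : ΓAd → ΓA → R) (h : ΓAd → ΓAd → R)
    (hs : ΓAd → ΓA) (φ₀ : ΓAd) : ΓAd → ΓAd → ΓAd :=
  fun α β => dotd α β + pair φ₀ (hs α) • β - h α β • φ₀

/-- Algebraic model: on a Jacobi-left-symmetric algebroid `((A,·_A,ρ_A),φ₀)` with `h ∈ Γ(S²A)`,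
`⟦h,h⟧_A^{φ₀}(α,β,γ) := ⟦h,h⟧_A(α,β,γ) + h(φ₀,α)h(β,γ) − h(φ₀,β)h(α,γ)` satisfies
`⟦h,h⟧_A^{φ₀}(α,β,γ) = ⟨h♯(α·^{h♯,φ₀}γ) − h♯α ·_A h♯γ, β⟩`. -/
theorem stmt8
    (R : Type*) [CommRing R] (ΓA : Type*) [AddCommGroup ΓA] [Module R ΓA]
    (ΓAd : Type*) [AddCommGroup ΓAd] [Module R ΓAd]
    (dot : ΓA → ΓA → ΓA) (ρ : ΓA → R → R)
    (pair : ΓAd → ΓA → R) (h : ΓAd → ΓAd → R) (hs : ΓAd → ΓA)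
    (dotd : ΓAd → ΓAd → ΓAd) (φ₀ : ΓAd)
    -- anchor axioms
    (hρ_add : ∀ X f g, ρ X (f + g) = ρ X f + ρ X g)
    (hρ_mul : ∀ X f g, ρ X (f * g) = f * ρ X g + g * ρ X f)
    (hρ_addX : ∀ X Y g, ρ (X + Y) g = ρ X g + ρ Y g)
    (hρ_smul : ∀ (f : R) X g, ρ (f • X) g = f * ρ X g)
    -- left-symmetric algebroid axioms
    (hdot_addl : ∀ X Y Z, dot (X + Y) Z = dot X Z + dot Y Z)
    (hdot_addr : ∀ X Y Z, dot X (Y + Z) = dot X Y + dot X Z)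
    (hdot_smull : ∀ (f : R) X Y, dot (f • X) Y = f • dot X Y)
    (hdot_smulr : ∀ (f : R) X Y, dot X (f • Y) = f • dot X Y + ρ X f • Y)
    (hlsym : ∀ X Y Z, dot (dot X Y) Z - dot X (dot Y Z) = dot (dot Y X) Z - dot Y (dot X Z))
    -- δ_A φ₀ symmetric (Jacobi-left-symmetric algebroid)
    (hδsym : ∀ X Y, ρ X (pair φ₀ Y) - pair φ₀ (dot X Y) = ρ Y (pair φ₀ X) - pair φ₀ (dot Y X))
    -- pairing axioms
    (hpair_addl : ∀ α β X, pair (α + β) X = pair α X + pair β X)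
    (hpair_addr : ∀ α X Y, pair α (X + Y) = pair α X + pair α Y)
    (hpair_smull : ∀ (f : R) α X, pair (f • α) X = f * pair α X)
    (hpair_smulr : ∀ (f : R) α X, pair α (f • X) = f * pair α X)
    -- h symmetric with induced map h♯
    (hsym : ∀ α β, h α β = h β α)
    (hhs : ∀ α β, pair α (hs β) = h α β)
    (hhs_add : ∀ α β, hs (α + β) = hs α + hs β)
    (hhs_smul : ∀ (f : R) α, hs (f • α) = f • hs α)
    -- defining property of α·^{h♯}β = L^A_{h♯α}β − R_{h♯β}α − d_A(h(α,β))
    (hdotd : ∀ α β Y, pair (dotd α β) Y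
        = ρ (hs α) (pair β Y) - pair β (dot (hs α) Y - dot Y (hs α))
          + pair α (dot Y (hs β)) - ρ Y (h α β))
    -- the identity ⟦h,h⟧_A(α,·,β) = h♯(α·^{h♯}β) − h♯α·_A h♯β
    (hmain : ∀ α β γ, pair γ (hs (dotd α β) - dot (hs α) (hs β))
        = BBr dot ρ pair h hs α γ β) :
    ∀ α β γ,
      BBr dot ρ pair h hs α β γ + h φ₀ α * h β γ - h φ₀ β * h α γ
        = pair β (hs (dotdPhi dotd pair h hs φ₀ α γ) - dot (hs α) (hs γ)) := by
  intro α β γ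
  have hsub : ∀ x y : ΓAd, hs (x - y) = hs x - hs y := by
    intro x y
    have : hs (x - y) = hs (x + (-1 : R) • y) := by ring_nf; rw [sub_eq_add_neg, ← neg_one_smul R y]
    rw [this, hhs_add, hhs_smul, neg_one_smul, ← sub_eq_add_neg]
  have hpsub : ∀ α (X Y : ΓA), pair α (X - Y) = pair α X - pair α Y := by
    intro α X Y
    have : X - Y = X + (-1 : R) • Y := by rw [sub_eq_add_neg, ← neg_one_smul R Y]
    rw [this, hpair_addr, hpair_smulr]; ring
  have key := hmain α γ β
  have expand : hs (dotdPhi dotd pair h hs φ₀ α γ)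
      = hs (dotd α γ) + pair φ₀ (hs α) • hs γ - h α γ • hs φ₀ := by
    unfold dotdPhi
    rw [hsub, hhs_add, hhs_smul, hhs_smul]
  rw [expand]
  have e1 : hs (dotd α γ) + pair φ₀ (hs α) • hs γ - h α γ • hs φ₀ - dot (hs α) (hs γ)
      = (hs (dotd α γ) - dot (hs α) (hs γ)) + pair φ₀ (hs α) • hs γ - h α γ • hs φ₀ := by
    abel
  rw [e1, hpsub, hpair_addr, hpair_smulr, hpair_smulr, key, hhs, hhs, hhs,
    hsym β φ₀, hsym φ₀ α]
  ring
end

section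
/- Let (A, φ₀) be a Jacobi-left-symmetric algebroid over M and à := A × ℝ over M × ℝ, with time-dependent sections. Define X̄ ·̄ Ȳ := X̄ ·_A Ȳ + φ₀(X̄)(∂Ȳ/∂t) and anchor ρ̄(X̄) := ρ_A(X̄) + ⟨φ₀,X̄⟩ ∂/∂t. Then (Ã, ·̄, ρ̄) is a left-symmetric algebroid over M × ℝ. Conversely, if (Ã, ·̄, ρ̄) so defined is a left-symmetric algebroid, then δ_A φ₀ is symmetric. Moreover the left-symmetry defect satisfies X̄·̄(Ȳ·̄Z̄) − Ȳ·̄(X̄·̄Z̄) − (X̄·̄Ȳ)·̄Z̄ + (Ȳ·̄X̄)·̄Z̄ = ((δ_Aφ₀)(X̄,Ȳ) − (δ_Aφ₀)(Ȳ,X̄)) ∂Z̄/∂t. -/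
/-- The product `X̄ ·̄ Ȳ := X̄ ·_A Ȳ + φ₀(X̄)·∂Ȳ/∂t` on time-dependent sections. -/
def dotBar {R ΓA : Type*} [CommRing R] [AddCommGroup ΓA] [Module R ΓA]
    (dot : ΓA → ΓA → ΓA) (φ₀ : ΓA → R) (Dt : ΓA → ΓA) : ΓA → ΓA → ΓA :=
  fun X Y => dot X Y + φ₀ X • Dt Y

/-- The anchor `ρ̄(X̄) := ρ_A(X̄) + ⟨φ₀,X̄⟩∂/∂t`. -/
def rhoBar {R ΓA : Type*} [CommRing R]
    (ρ : ΓA → R → R) (φ₀ : ΓA → R) (dt : R → R) : ΓA → R → R :=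
  fun X f => ρ X f + φ₀ X * dt f

/-- Algebraic model: `R = C^∞(M×ℝ)` with `dt = ∂/∂t`, `ΓA` = time-dependent sections of a
left-symmetric algebroid `A` over `M` (product `dot`, anchor `ρ` and `φ₀ ∈ Γ(A*)` extended
t-pointwise, `Dt = ∂/∂t` on sections).  Then `(Ã, ·̄, ρ̄)` with
`X̄·̄Ȳ = X̄·_A Ȳ + φ₀(X̄)∂Ȳ/∂t`, `ρ̄(X̄) = ρ_A(X̄) + ⟨φ₀,X̄⟩∂/∂t` satisfies the left-symmetry
defect formula `X̄·̄(Ȳ·̄Z̄) − Ȳ·̄(X̄·̄Z̄) − (X̄·̄Ȳ)·̄Z̄ + (Ȳ·̄X̄)·̄Z̄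
= ((δ_Aφ₀)(X̄,Ȳ) − (δ_Aφ₀)(Ȳ,X̄))·∂Z̄/∂t`, the anchored Leibniz rules hold, and
`(Ã,·̄,ρ̄)` is a left-symmetric algebroid iff `δ_A φ₀` is symmetric. -/
theorem stmt11
    (R : Type*) [CommRing R] (ΓA : Type*) [AddCommGroup ΓA] [Module R ΓA]
    (dot : ΓA → ΓA → ΓA) (ρ : ΓA → R → R)
    -- anchor axioms
    (hρ_add : ∀ X f g, ρ X (f + g) = ρ X f + ρ X g)
    (hρ_mul : ∀ X f g, ρ X (f * g) = f * ρ X g + g * ρ X f)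
    (hρ_addX : ∀ X Y g, ρ (X + Y) g = ρ X g + ρ Y g)
    (hρ_smul : ∀ (f : R) X g, ρ (f • X) g = f * ρ X g)
    -- left-symmetric algebroid axioms
    (hdot_addl : ∀ X Y Z, dot (X + Y) Z = dot X Z + dot Y Z)
    (hdot_addr : ∀ X Y Z, dot X (Y + Z) = dot X Y + dot X Z)
    (hdot_smull : ∀ (f : R) X Y, dot (f • X) Y = f • dot X Y)
    (hdot_smulr : ∀ (f : R) X Y, dot X (f • Y) = f • dot X Y + ρ X f • Y)
    (hlsym : ∀ X Y Z, dot (dot X Y) Z - dot X (dot Y Z) = dot (dot Y X) Z - dot Y (dot X Z))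
    -- φ₀, extended t-pointwise
    (φ₀ : ΓA → R)
    (hφ_add : ∀ X Y, φ₀ (X + Y) = φ₀ X + φ₀ Y)
    (hφ_smul : ∀ (f : R) X, φ₀ (f • X) = f * φ₀ X)
    -- ∂/∂t on functions and on sections
    (dt : R → R) (Dt : ΓA → ΓA)
    (hdt_add : ∀ f g, dt (f + g) = dt f + dt g)
    (hdt_mul : ∀ f g, dt (f * g) = f * dt g + g * dt f)
    (hDt_add : ∀ X Y, Dt (X + Y) = Dt X + Dt Y)
    (hDt_smul : ∀ (f : R) X, Dt (f • X) = dt f • X + f • Dt X)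
    -- dot, ρ, φ₀ are t-independent (extended t-pointwise)
    (hDt_dot : ∀ X Y, Dt (dot X Y) = dot (Dt X) Y + dot X (Dt Y))
    (hdtρ : ∀ X f, dt (ρ X f) = ρ (Dt X) f + ρ X (dt f))
    (hdtφ : ∀ X, dt (φ₀ X) = φ₀ (Dt X))
    -- ∂Z̄/∂t separates coefficients
    (hsep : ∀ c : R, (∀ Z, c • Dt Z = (0 : ΓA)) → c = 0) :
    -- the left-symmetry defect formula
    (∀ X Y Z,
      dotBar dot φ₀ Dt X (dotBar dot φ₀ Dt Y Z) - dotBar dot φ₀ Dt Y (dotBar dot φ₀ Dt X Z)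
        - dotBar dot φ₀ Dt (dotBar dot φ₀ Dt X Y) Z + dotBar dot φ₀ Dt (dotBar dot φ₀ Dt Y X) Z
      = ((ρ X (φ₀ Y) - φ₀ (dot X Y)) - (ρ Y (φ₀ X) - φ₀ (dot Y X))) • Dt Z)
    -- the anchored Leibniz rules for (·̄, ρ̄)
    ∧ (∀ (f : R) X Y, dotBar dot φ₀ Dt X (f • Y)
        = f • dotBar dot φ₀ Dt X Y + rhoBar ρ φ₀ dt X f • Y)
    ∧ (∀ (f : R) X Y, dotBar dot φ₀ Dt (f • X) Y = f • dotBar dot φ₀ Dt X Y)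
    -- (Ã,·̄,ρ̄) is a left-symmetric algebroid iff δ_A φ₀ is symmetric
    ∧ ((∀ X Y, ρ X (φ₀ Y) - φ₀ (dot X Y) = ρ Y (φ₀ X) - φ₀ (dot Y X))
        ↔ (∀ X Y Z,
          dotBar dot φ₀ Dt (dotBar dot φ₀ Dt X Y) Z - dotBar dot φ₀ Dt X (dotBar dot φ₀ Dt Y Z)
            = dotBar dot φ₀ Dt (dotBar dot φ₀ Dt Y X) Z
              - dotBar dot φ₀ Dt Y (dotBar dot φ₀ Dt X Z))) := by
  have defect : ∀ X Y Z,
      dotBar dot φ₀ Dt X (dotBar dot φ₀ Dt Y Z) - dotBar dot φ₀ Dt Y (dotBar dot φ₀ Dt X Z)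
        - dotBar dot φ₀ Dt (dotBar dot φ₀ Dt X Y) Z + dotBar dot φ₀ Dt (dotBar dot φ₀ Dt Y X) Z
      = ((ρ X (φ₀ Y) - φ₀ (dot X Y)) - (ρ Y (φ₀ X) - φ₀ (dot Y X))) • Dt Z := by
    intro X Y Z
    have h1 : dot (dot X Y) Z
        = (dot (dot Y X) Z - dot Y (dot X Z)) + dot X (dot Y Z) :=
      eq_add_of_sub_eq (hlsym X Y Z)
    simp only [dotBar, hdot_addr, hdot_addl, hdot_smulr, hdot_smull, hDt_add, hDt_smul,
      hφ_add, hφ_smul, hDt_dot, hdtφ, smul_add, add_smul, sub_smul, mul_smul, h1]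
    module
  refine ⟨defect, ?_, ?_, ?_⟩
  · intro f X Y
    simp only [dotBar, rhoBar, hdot_smulr, hDt_smul, smul_add, add_smul, mul_smul]
    module
  · intro f X Y
    simp only [dotBar, hdot_smull, hφ_smul, smul_add, mul_smul]
  · constructor
    · intro hsym X Y Z
      have h := defect X Y Z
      rw [hsym X Y, sub_self, zero_smul] at h
      have e : dotBar dot φ₀ Dt (dotBar dot φ₀ Dt X Y) Z
            - dotBar dot φ₀ Dt X (dotBar dot φ₀ Dt Y Z)
          - (dotBar dot φ₀ Dt (dotBar dot φ₀ Dt Y X) Z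
            - dotBar dot φ₀ Dt Y (dotBar dot φ₀ Dt X Z))
          = -(dotBar dot φ₀ Dt X (dotBar dot φ₀ Dt Y Z)
              - dotBar dot φ₀ Dt Y (dotBar dot φ₀ Dt X Z)
              - dotBar dot φ₀ Dt (dotBar dot φ₀ Dt X Y) Z
              + dotBar dot φ₀ Dt (dotBar dot φ₀ Dt Y X) Z) := by abel
      exact sub_eq_zero.mp (by rw [e, h, neg_zero])
    · intro hls X Y
      have key : ∀ Z, ((ρ X (φ₀ Y) - φ₀ (dot X Y)) - (ρ Y (φ₀ X) - φ₀ (dot Y X))) • Dt Z = 0 := by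
        intro Z
        rw [← defect X Y Z]
        have e : dotBar dot φ₀ Dt X (dotBar dot φ₀ Dt Y Z)
              - dotBar dot φ₀ Dt Y (dotBar dot φ₀ Dt X Z)
              - dotBar dot φ₀ Dt (dotBar dot φ₀ Dt X Y) Z
              + dotBar dot φ₀ Dt (dotBar dot φ₀ Dt Y X) Z
            = (dotBar dot φ₀ Dt (dotBar dot φ₀ Dt Y X) Z
                - dotBar dot φ₀ Dt Y (dotBar dot φ₀ Dt X Z))
              - (dotBar dot φ₀ Dt (dotBar dot φ₀ Dt X Y) Z
                - dotBar dot φ₀ Dt X (dotBar dot φ₀ Dt Y Z)) := by abel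
        rw [e, hls X Y Z, sub_self]
      exact sub_eq_zero.mp (hsep _ key)
end

section
/- Let (A, φ₀) be a Jacobi-left-symmetric algebroid over M, h ∈ Γ(S²A), and h̃ := e^{−t}h ∈ Γ(S²Ã) on the left-symmetric algebroid (Ã, ·̄^{φ₀}, ρ̄^{φ₀}) over M×ℝ. Then ⟦h̃,h̃⟧_{Ã}(α̃, β̃, γ̃) = e^{−2t} ⟦h,h⟧_A^{φ₀}(α̃, β̃, γ̃) for all time-dependent cosections. Consequently, h is a Jacobi-Koszul-Vinberg structure on (A,φ₀) if and only if h̃ is a Koszul-Vinberg structure on Ã (i.e. ⟦h̃,h̃⟧_{Ã} = 0). -/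
/-- Algebraic model of the Koszul-Vinbergization: `R = C^∞(M×ℝ)`, `ΓA`/`ΓAd` = time-dependent
sections/cosections of a Jacobi-left-symmetric algebroid `(A,φ₀)` over `M`, `e = e^{−t}`.
For `h ∈ Γ(S²A)` (extended t-pointwise) and `h̃ := e^{−t}h` (so `h̃ α β = e·h(α,β)`,
`h̃♯α = e·h♯α`), one has `⟦h̃,h̃⟧_{Ã}(α̃,β̃,γ̃) = e^{−2t}·⟦h,h⟧_A^{φ₀}(α̃,β̃,γ̃)`; consequently
`h` is a Jacobi-Koszul-Vinberg structure on `(A,φ₀)` iff `h̃` is a Koszul-Vinberg structure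
on `(Ã,·̄^{φ₀},ρ̄^{φ₀})`. -/
theorem stmt12
    (R : Type*) [CommRing R] (ΓA : Type*) [AddCommGroup ΓA] [Module R ΓA]
    (ΓAd : Type*) [AddCommGroup ΓAd] [Module R ΓAd]
    (dot : ΓA → ΓA → ΓA) (ρ : ΓA → R → R)
    (pair : ΓAd → ΓA → R) (h : ΓAd → ΓAd → R) (hs : ΓAd → ΓA)
    -- anchor axioms
    (hρ_add : ∀ X f g, ρ X (f + g) = ρ X f + ρ X g)
    (hρ_mul : ∀ X f g, ρ X (f * g) = f * ρ X g + g * ρ X f)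
    (hρ_addX : ∀ X Y g, ρ (X + Y) g = ρ X g + ρ Y g)
    (hρ_smul : ∀ (f : R) X g, ρ (f • X) g = f * ρ X g)
    -- left-symmetric algebroid axioms
    (hdot_addl : ∀ X Y Z, dot (X + Y) Z = dot X Z + dot Y Z)
    (hdot_addr : ∀ X Y Z, dot X (Y + Z) = dot X Y + dot X Z)
    (hdot_smull : ∀ (f : R) X Y, dot (f • X) Y = f • dot X Y)
    (hdot_smulr : ∀ (f : R) X Y, dot X (f • Y) = f • dot X Y + ρ X f • Y)
    (hlsym : ∀ X Y Z, dot (dot X Y) Z - dot X (dot Y Z) = dot (dot Y X) Z - dot Y (dot X Z))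
    -- φ₀ (as a functional on sections, extended t-pointwise), with δ_A φ₀ symmetric
    (φ₀ : ΓA → R)
    (hφ_add : ∀ X Y, φ₀ (X + Y) = φ₀ X + φ₀ Y)
    (hφ_smul : ∀ (f : R) X, φ₀ (f • X) = f * φ₀ X)
    (hδsym : ∀ X Y, ρ X (φ₀ Y) - φ₀ (dot X Y) = ρ Y (φ₀ X) - φ₀ (dot Y X))
    -- pairing axioms
    (hpair_addl : ∀ α β X, pair (α + β) X = pair α X + pair β X)
    (hpair_addr : ∀ α X Y, pair α (X + Y) = pair α X + pair α Y)
    (hpair_smull : ∀ (f : R) α X, pair (f • α) X = f * pair α X)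
    (hpair_smulr : ∀ (f : R) α X, pair α (f • X) = f * pair α X)
    -- h symmetric with induced map h♯
    (hsym : ∀ α β, h α β = h β α)
    (hhs : ∀ α β, pair α (hs β) = h α β)
    (hhs_add : ∀ α β, hs (α + β) = hs α + hs β)
    (hhs_smul : ∀ (f : R) α, hs (f • α) = f • hs α)
    -- ∂/∂t on functions, sections and cosections
    (dt : R → R) (Dt : ΓA → ΓA) (Dtd : ΓAd → ΓAd)
    (hdt_add : ∀ f g, dt (f + g) = dt f + dt g)
    (hdt_mul : ∀ f g, dt (f * g) = f * dt g + g * dt f)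
    (hDt_add : ∀ X Y, Dt (X + Y) = Dt X + Dt Y)
    (hDt_smul : ∀ (f : R) X, Dt (f • X) = dt f • X + f • Dt X)
    (hdt_pair : ∀ α X, dt (pair α X) = pair (Dtd α) X + pair α (Dt X))
    -- dot, ρ, φ₀, h are t-independent (extended t-pointwise)
    (hDt_dot : ∀ X Y, Dt (dot X Y) = dot (Dt X) Y + dot X (Dt Y))
    (hdtρ : ∀ X f, dt (ρ X f) = ρ (Dt X) f + ρ X (dt f))
    (hdtφ : ∀ X, dt (φ₀ X) = φ₀ (Dt X))
    (hDt_hs : ∀ α, Dt (hs α) = hs (Dtd α))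
    -- the function e = e^{−t}
    (e : R) (hdte : dt e = -e) (he : IsUnit e) (hρe : ∀ X, ρ X e = 0) :
    -- ⟦h̃,h̃⟧_{Ã} = e^{−2t} ⟦h,h⟧_A^{φ₀}
    (∀ α β γ,
      rhoBar ρ φ₀ dt (e • hs α) (e * h β γ) - rhoBar ρ φ₀ dt (e • hs β) (e * h α γ)
        + pair α (dotBar dot φ₀ Dt (e • hs β) (e • hs γ))
        - pair β (dotBar dot φ₀ Dt (e • hs α) (e • hs γ))
        - pair γ (dotBar dot φ₀ Dt (e • hs α) (e • hs β)
            - dotBar dot φ₀ Dt (e • hs β) (e • hs α))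
      = e * e * (BBr dot ρ pair h hs α β γ + φ₀ (hs α) * h β γ - φ₀ (hs β) * h α γ))
    -- h is Jacobi-Koszul-Vinberg iff h̃ is Koszul-Vinberg
    ∧ ((∀ α β γ,
          BBr dot ρ pair h hs α β γ + φ₀ (hs α) * h β γ - φ₀ (hs β) * h α γ = 0)
        ↔ (∀ α β γ,
          rhoBar ρ φ₀ dt (e • hs α) (e * h β γ) - rhoBar ρ φ₀ dt (e • hs β) (e * h α γ)
            + pair α (dotBar dot φ₀ Dt (e • hs β) (e • hs γ))
            - pair β (dotBar dot φ₀ Dt (e • hs α) (e • hs γ))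
            - pair γ (dotBar dot φ₀ Dt (e • hs α) (e • hs β)
                - dotBar dot φ₀ Dt (e • hs β) (e • hs α)) = 0)) := by

  have dt_h : ∀ a b, dt (h a b) = h (Dtd a) b + h a (Dtd b) := by
    intro a b
    rw [← hhs, hdt_pair, hDt_hs, hhs, hhs]
  have hpair_neg : ∀ α (X : ΓA), pair α (-X) = - pair α X := by
    intro α X
    rw [← neg_one_smul R X, hpair_smulr]; ring
  have hpair_zero : ∀ α, pair α (0 : ΓA) = 0 := by
    intro α
    have := hpair_smulr 0 α 0
    simpa using this
  have key : ∀ α β γ,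
      rhoBar ρ φ₀ dt (e • hs α) (e * h β γ) - rhoBar ρ φ₀ dt (e • hs β) (e * h α γ)
        + pair α (dotBar dot φ₀ Dt (e • hs β) (e • hs γ))
        - pair β (dotBar dot φ₀ Dt (e • hs α) (e • hs γ))
        - pair γ (dotBar dot φ₀ Dt (e • hs α) (e • hs β)
            - dotBar dot φ₀ Dt (e • hs β) (e • hs α))
      = e * e * (BBr dot ρ pair h hs α β γ + φ₀ (hs α) * h β γ - φ₀ (hs β) * h α γ) := by
    intro α β γ
    simp only [rhoBar, dotBar, BBr, hρ_smul, hρ_mul, hρe, hφ_smul, hdt_mul, hdte,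
      hdot_smull, hdot_smulr, hDt_smul, hDt_hs, dt_h, sub_eq_add_neg, smul_add,
      hpair_addr, hpair_smulr, smul_smul, neg_smul, hpair_addl, hpair_smull, hhs,
      smul_neg, mul_zero, zero_mul, add_zero, zero_add, mul_neg, neg_neg,
      hpair_neg, hpair_zero, zero_smul]
    rw [hsym γ β, hsym γ α, hsym γ (Dtd β), hsym γ (Dtd α)]
    ring
  refine ⟨key, fun H α β γ => by rw [key, H α β γ]; ring, fun H α β γ => ?_⟩
  have h2 := key α β γ
  rw [H α β γ] at h2
  exact ((he.mul he).mul_right_eq_zero.mp h2.symm)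
end

section
/- Let (M,∇) be an affine manifold and identify (h,E) ∈ Γ(S²TM)×𝔛(M) with H = h + ∂/∂t ⊗ E + E ⊗ ∂/∂t ∈ Γ(S²(TM⊕ℝ)). Then ⟦H,H⟧_{TM⊕ℝ}^{(0,1)} = 0 on the Jacobi-left-symmetric algebroid (TM⊕ℝ, ∇̄, pr₁) with φ₀ = (0,1) if and only if (h,E) satisfies: (i) (∇_{h♯α}h)(β,γ) − ⟨α,E⟩h(β,γ) = (∇_{h♯β}h)(α,γ) − ⟨β,E⟩h(α,γ), (ii) (∇_E h)(β,γ) − ⟨γ, ∇_{h♯β}E⟩ + ⟨β,E⟩⟨γ,E⟩ = 0, and (iii) ∇_E E = 0, for all 1-forms α,β,γ. -/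
/-- `H = h + ∂/∂t ⊗ E + E ⊗ ∂/∂t` as a symmetric form on cosections `(α,f)` of `TM⊕ℝ`:
`H((α,f),(β,g)) = h(α,β) + ⟨α,E⟩g + ⟨β,E⟩f`. -/
def Hform {R ΓX ΓXd : Type*} [CommRing R]
    (h : ΓXd → ΓXd → R) (pair : ΓXd → ΓX → R) (E : ΓX) :
    ΓXd × R → ΓXd × R → R :=
  fun ξ η => h ξ.1 η.1 + pair ξ.1 E * η.2 + pair η.1 E * ξ.2

/-- `H♯(α,f) = (h♯α + fE, ⟨α,E⟩)`. -/
def Hsharp {R ΓX ΓXd : Type*} [CommRing R] [AddCommGroup ΓX] [Module R ΓX]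
    (hs : ΓXd → ΓX) (pair : ΓXd → ΓX → R) (E : ΓX) :
    ΓXd × R → ΓX × R :=
  fun ξ => (hs ξ.1 + ξ.2 • E, pair ξ.1 E)

/-- The left-symmetric product `∇̄_{(X,f)}(Y,g) = (∇_X Y, Xg)` on sections of `TM⊕ℝ`. -/
def dotOplus {R ΓX : Type*}
    (conn : ΓX → ΓX → ΓX) (ρ : ΓX → R → R) : ΓX × R → ΓX × R → ΓX × R :=
  fun P Q => (conn P.1 Q.1, ρ P.1 Q.2)

/-- The duality pairing on `TM⊕ℝ`: `⟨(α,f),(X,g)⟩ = ⟨α,X⟩ + fg`. -/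
def pairOplus {R ΓX ΓXd : Type*} [CommRing R]
    (pair : ΓXd → ΓX → R) : ΓXd × R → ΓX × R → R :=
  fun ξ P => pair ξ.1 P.1 + ξ.2 * P.2

/-- `⟦H,H⟧_{TM⊕ℝ}` evaluated on three cosections of `TM⊕ℝ` (anchor `pr₁`). -/
def BBH {R ΓX ΓXd : Type*} [CommRing R] [AddCommGroup ΓX] [Module R ΓX]
    (conn : ΓX → ΓX → ΓX) (ρ : ΓX → R → R)
    (pair : ΓXd → ΓX → R) (h : ΓXd → ΓXd → R) (hs : ΓXd → ΓX) (E : ΓX) :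
    ΓXd × R → ΓXd × R → ΓXd × R → R :=
  fun ξ η ζ =>
    ρ (Hsharp hs pair E ξ).1 (Hform h pair E η ζ)
      - ρ (Hsharp hs pair E η).1 (Hform h pair E ξ ζ)
      + pairOplus pair ξ (dotOplus conn ρ (Hsharp hs pair E η) (Hsharp hs pair E ζ))
      - pairOplus pair η (dotOplus conn ρ (Hsharp hs pair E ξ) (Hsharp hs pair E ζ))
      - pairOplus pair ζ (dotOplus conn ρ (Hsharp hs pair E ξ) (Hsharp hs pair E η)
          - dotOplus conn ρ (Hsharp hs pair E η) (Hsharp hs pair E ξ))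

/-- `(∇_X h)(α,β) = X(h(α,β)) − h(∇_X α,β) − h(α,∇_X β)`. -/
def nablah {R ΓX ΓXd : Type*} [CommRing R]
    (ρ : ΓX → R → R) (connd : ΓX → ΓXd → ΓXd) (h : ΓXd → ΓXd → R) :
    ΓX → ΓXd → ΓXd → R :=
  fun X α β => ρ X (h α β) - h (connd X α) β - h α (connd X β)

/-- Algebraic model: `R = C^∞(M)`, `ΓX` = vector fields on an affine manifold `(M,∇)`
(`ρ X f = Xf`), `ΓXd` = 1-forms.  Identifying `(h,E) ∈ Γ(S²TM)×𝔛(M)` with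
`H = h + ∂/∂t⊗E + E⊗∂/∂t ∈ Γ(S²(TM⊕ℝ))`, on the Jacobi-left-symmetric algebroid
`(TM⊕ℝ,∇̄,pr₁)` with `φ₀ = (0,1)` one has `⟦H,H⟧^{(0,1)}_{TM⊕ℝ} = 0` iff `(h,E)` satisfies
the three axioms (i), (ii), (iii) of a Jacobi-Koszul-Vinberg structure. -/
theorem stmt13
    (R : Type*) [CommRing R] (ΓX : Type*) [AddCommGroup ΓX] [Module R ΓX]
    (ΓXd : Type*) [AddCommGroup ΓXd] [Module R ΓXd]
    (ρ : ΓX → R → R) (conn : ΓX → ΓX → ΓX) (connd : ΓX → ΓXd → ΓXd)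
    (pair : ΓXd → ΓX → R) (h : ΓXd → ΓXd → R) (hs : ΓXd → ΓX) (E : ΓX)
    -- vector fields act as derivations on functions
    (hρ_add : ∀ X f g, ρ X (f + g) = ρ X f + ρ X g)
    (hρ_mul : ∀ X f g, ρ X (f * g) = f * ρ X g + g * ρ X f)
    (hρ_addX : ∀ X Y g, ρ (X + Y) g = ρ X g + ρ Y g)
    (hρ_smul : ∀ (f : R) X g, ρ (f • X) g = f * ρ X g)
    -- ∇ is an affine connection …
    (hconn_addl : ∀ X Y Z, conn (X + Y) Z = conn X Z + conn Y Z)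
    (hconn_addr : ∀ X Y Z, conn X (Y + Z) = conn X Y + conn X Z)
    (hconn_smull : ∀ (f : R) X Y, conn (f • X) Y = f • conn X Y)
    (hconn_smulr : ∀ (f : R) X Y, conn X (f • Y) = f • conn X Y + ρ X f • Y)
    -- … which is flat (it is torsion-free by definition of the bracket ∇XY−∇YX)
    (hflat : ∀ X Y Z, conn X (conn Y Z) - conn Y (conn X Z) = conn (conn X Y - conn Y X) Z)
    -- the induced connection on 1-forms
    (hconnd : ∀ X α Y, pair (connd X α) Y = ρ X (pair α Y) - pair α (conn X Y))
    -- pairing axioms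
    (hpair_addl : ∀ α β X, pair (α + β) X = pair α X + pair β X)
    (hpair_addr : ∀ α X Y, pair α (X + Y) = pair α X + pair α Y)
    (hpair_smull : ∀ (f : R) α X, pair (f • α) X = f * pair α X)
    (hpair_smulr : ∀ (f : R) α X, pair α (f • X) = f * pair α X)
    (hsep : ∀ X, (∀ α, pair α X = 0) → X = 0)
    -- h symmetric with induced map h♯
    (hsym : ∀ α β, h α β = h β α)
    (hhs : ∀ α β, pair α (hs β) = h α β)
    (hhs_add : ∀ α β, hs (α + β) = hs α + hs β)
    (hhs_smul : ∀ (f : R) α, hs (f • α) = f • hs α) :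
    -- ⟦H,H⟧^{(0,1)} = 0 …
    (∀ ξ η ζ : ΓXd × R,
      BBH conn ρ pair h hs E ξ η ζ
        + Hform h pair E ((0 : ΓXd), (1 : R)) ξ * Hform h pair E η ζ
        - Hform h pair E ((0 : ΓXd), (1 : R)) η * Hform h pair E ξ ζ = 0)
    ↔ -- … iff (h,E) is a Jacobi-Koszul-Vinberg structure on (M,∇):
    -- (i)
    ((∀ α β γ, nablah ρ connd h (hs α) β γ - pair α E * h β γ
        = nablah ρ connd h (hs β) α γ - pair β E * h α γ)
    -- (ii)
    ∧ (∀ β γ, nablah ρ connd h E β γ - pair γ (conn (hs β) E)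
        + pair β E * pair γ E = 0)
    -- (iii)
    ∧ conn E E = 0) := by
    -- basic consequences of the axioms
  have pair0l : ∀ X : ΓX, pair 0 X = 0 := fun X => by
    simpa using hpair_smull 0 0 X
  have pair0r : ∀ α : ΓXd, pair α 0 = 0 := fun α => by
    simpa using hpair_smulr 0 α 0
  have hs0 : hs 0 = 0 := by simpa using hhs_smul 0 0
  have h0l : ∀ γ, h 0 γ = 0 := fun γ => by rw [← hhs, pair0l]
  have h0r : ∀ γ, h γ 0 = 0 := fun γ => by rw [hsym, h0l]
  have rho0X : ∀ r : R, ρ 0 r = 0 := fun r => by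
    simpa using hρ_smul 0 0 r
  have rho0r : ∀ X : ΓX, ρ X 0 = 0 := fun X => by
    have h0 := hρ_add X 0 0
    rw [add_zero] at h0
    exact (left_eq_add.mp h0)
  have conn0l : ∀ X : ΓX, conn 0 X = 0 := fun X => by
    simpa using hconn_smull 0 0 X
  have conn0r : ∀ X : ΓX, conn X 0 = 0 := fun X => by
    simpa using hconn_smulr 0 X 0
  have hpair_subr : ∀ (α : ΓXd) (X Y : ΓX), pair α (X - Y) = pair α X - pair α Y := by
    intro α X Y
    rw [sub_eq_add_neg, hpair_addr, ← neg_one_smul R Y, hpair_smulr]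
    ring
  -- the covariant derivative of h, rewritten
  have nab : ∀ (X : ΓX) (β γ : ΓXd), nablah ρ connd h X β γ
      = pair β (conn X (hs γ)) + pair γ (conn X (hs β)) - ρ X (h β γ) := by
    intro X β γ
    have e1 : h (connd X β) γ = ρ X (h β γ) - pair β (conn X (hs γ)) := by
      rw [← hhs, hconnd, hhs]
    have e2 : h β (connd X γ) = ρ X (h β γ) - pair γ (conn X (hs β)) := by
      rw [hsym β (connd X γ), ← hhs, hconnd, hhs, hsym γ β]
    simp only [nablah]
    rw [e1, e2]; ring
  -- the key expansion of ⟦H,H⟧^{(0,1)}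
  have key : ∀ (α β γ : ΓXd) (f g k : R),
      BBH conn ρ pair h hs E (α, f) (β, g) (γ, k)
        + Hform h pair E ((0 : ΓXd), (1 : R)) (α, f) * Hform h pair E (β, g) (γ, k)
        - Hform h pair E ((0 : ΓXd), (1 : R)) (β, g) * Hform h pair E (α, f) (γ, k)
      = -(pair β (conn (hs α) (hs γ)) + pair γ (conn (hs α) (hs β)) - ρ (hs α) (h β γ)
            - pair α E * h β γ
          - (pair α (conn (hs β) (hs γ)) + pair γ (conn (hs β) (hs α)) - ρ (hs β) (h α γ)
            - pair β E * h α γ))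
        - f * (pair β (conn E (hs γ)) + pair γ (conn E (hs β)) - ρ E (h β γ)
            - pair γ (conn (hs β) E) + pair β E * pair γ E)
        + g * (pair α (conn E (hs γ)) + pair γ (conn E (hs α)) - ρ E (h α γ)
            - pair γ (conn (hs α) E) + pair α E * pair γ E)
        + k * (pair α (conn (hs β) E) - pair β (conn (hs α) E))
        + k * g * pair α (conn E E) - k * f * pair β (conn E E) := by
    intro α β γ f g k
    simp only [BBH, Hform, Hsharp, dotOplus, pairOplus, Prod.fst_sub, Prod.snd_sub,
      hconn_addl, hconn_addr, hconn_smull, hconn_smulr,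
      hρ_addX, hρ_smul, hρ_add, hρ_mul,
      hpair_addr, hpair_smulr, hpair_subr, pair0l, h0l]
    ring
  constructor
  · intro Hyp
    refine ⟨fun α β γ => ?_, fun β γ => ?_, ?_⟩
    · linear_combination key α β γ 0 0 0 - Hyp (α, 0) (β, 0) (γ, 0)
        + nab (hs α) β γ - nab (hs β) α γ
    · have e := (key 0 β γ 1 0 0).symm.trans
        (Hyp ((0 : ΓXd), (1 : R)) (β, 0) (γ, 0))
      simp only [hs0, conn0l, conn0r, pair0l, pair0r, rho0X, rho0r, h0l, h0r,
        zero_mul, mul_zero, one_mul, mul_one, add_zero, zero_add, sub_zero,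
        zero_sub, neg_zero, neg_neg, sub_self] at e
      linear_combination nab E β γ - e
    · refine hsep _ (fun α => ?_)
      have e := (key 0 α 0 1 0 1).symm.trans
        (Hyp ((0 : ΓXd), (1 : R)) (α, 0) ((0 : ΓXd), (1 : R)))
      simp only [hs0, conn0l, conn0r, pair0l, pair0r, rho0X, rho0r, h0l, h0r,
        zero_mul, mul_zero, one_mul, mul_one, add_zero, zero_add, sub_zero,
        zero_sub, neg_zero, neg_neg, sub_self] at e
      linear_combination -e
  · rintro ⟨hi, hii, hiii⟩ ⟨α, f⟩ ⟨β, g⟩ ⟨γ, k⟩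
    have hi' : ∀ α β γ : ΓXd,
        pair β (conn (hs α) (hs γ)) + pair γ (conn (hs α) (hs β)) - ρ (hs α) (h β γ)
          - pair α E * h β γ
        = pair α (conn (hs β) (hs γ)) + pair γ (conn (hs β) (hs α)) - ρ (hs β) (h α γ)
          - pair β E * h α γ := fun α β γ => by
      linear_combination hi α β γ - nab (hs α) β γ + nab (hs β) α γ
    have hii' : ∀ β γ : ΓXd,
        pair β (conn E (hs γ)) + pair γ (conn E (hs β)) - ρ E (h β γ)
          - pair γ (conn (hs β) E) + pair β E * pair γ E = 0 := fun β γ => by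
      linear_combination hii β γ - nab E β γ
    have hsρ : ∀ α β : ΓXd, ρ E (h α β) = ρ E (h β α) := fun α β => by rw [hsym]
    have p3 : ∀ δ : ΓXd, pair δ (conn E E) = 0 := fun δ => by
      rw [hiii]; exact pair0r δ
    linear_combination key α β γ f g k - hi' α β γ - f * hii' β γ + g * hii' α γ
      + k * hii' α β - k * hii' β α + k * hsρ α β
      + (k * g) * p3 α - (k * f) * p3 β
end

section
/- Let (M, ∇, h, E) be a Jacobi-Koszul-Vinberg manifold with h non-degenerate, g the (pseudo-)Riemannian metric with g♭ = (h♯)^{-1}, and θ = g♭E. Then ∇g + θ ⊗ g is symmetric in its first two arguments, i.e. (∇_X g)(Y,Z) + θ(X)g(Y,Z) = (∇_Y g)(X,Z) + θ(Y)g(X,Z) for all vector fields X, Y, Z; that is, (M,∇,g,θ) is a semi-Weyl manifold. -/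
/-- `(∇_X g)(Y,Z) = X(g(Y,Z)) − g(∇_X Y,Z) − g(Y,∇_X Z)` for `g(Y,Z) = ⟨g♭Y,Z⟩`. -/
def nablag {R ΓX ΓXd : Type*} [CommRing R]
    (ρ : ΓX → R → R) (conn : ΓX → ΓX → ΓX) (pair : ΓXd → ΓX → R) (gflat : ΓX → ΓXd) :
    ΓX → ΓX → ΓX → R :=
  fun X Y Z => ρ X (pair (gflat Y) Z) - pair (gflat (conn X Y)) Z - pair (gflat Y) (conn X Z)

/-- Algebraic model: a Jacobi-Koszul-Vinberg manifold `(M,∇,h,E)` (`∇` torsion-free flat,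
`(h,E)` satisfying axioms (i),(ii),(iii)) with `h` non-degenerate, `g` the metric with
`g♭ = (h♯)^{-1}`, and `θ = g♭E`.  Then `∇g + θ⊗g` is symmetric in its first two arguments:
`(∇_X g)(Y,Z) + θ(X)g(Y,Z) = (∇_Y g)(X,Z) + θ(Y)g(X,Z)`, i.e. `(M,∇,g,θ)` is a semi-Weyl
manifold. -/
theorem stmt14
    (R : Type*) [CommRing R] (ΓX : Type*) [AddCommGroup ΓX] [Module R ΓX]
    (ΓXd : Type*) [AddCommGroup ΓXd] [Module R ΓXd]
    (ρ : ΓX → R → R) (conn : ΓX → ΓX → ΓX) (connd : ΓX → ΓXd → ΓXd)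
    (pair : ΓXd → ΓX → R) (h : ΓXd → ΓXd → R) (hs : ΓXd → ΓX) (gflat : ΓX → ΓXd)
    (E : ΓX)
    -- vector fields act as derivations on functions
    (hρ_add : ∀ X f g, ρ X (f + g) = ρ X f + ρ X g)
    (hρ_mul : ∀ X f g, ρ X (f * g) = f * ρ X g + g * ρ X f)
    (hρ_addX : ∀ X Y g, ρ (X + Y) g = ρ X g + ρ Y g)
    (hρ_smul : ∀ (f : R) X g, ρ (f • X) g = f * ρ X g)
    -- ∇ is an affine connection, flat (torsion-free via the bracket ∇XY−∇YX)
    (hconn_addl : ∀ X Y Z, conn (X + Y) Z = conn X Z + conn Y Z)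
    (hconn_addr : ∀ X Y Z, conn X (Y + Z) = conn X Y + conn X Z)
    (hconn_smull : ∀ (f : R) X Y, conn (f • X) Y = f • conn X Y)
    (hconn_smulr : ∀ (f : R) X Y, conn X (f • Y) = f • conn X Y + ρ X f • Y)
    (hflat : ∀ X Y Z, conn X (conn Y Z) - conn Y (conn X Z) = conn (conn X Y - conn Y X) Z)
    -- the induced connection on 1-forms
    (hconnd : ∀ X α Y, pair (connd X α) Y = ρ X (pair α Y) - pair α (conn X Y))
    -- pairing axioms
    (hpair_addl : ∀ α β X, pair (α + β) X = pair α X + pair β X)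
    (hpair_addr : ∀ α X Y, pair α (X + Y) = pair α X + pair α Y)
    (hpair_smull : ∀ (f : R) α X, pair (f • α) X = f * pair α X)
    (hpair_smulr : ∀ (f : R) α X, pair α (f • X) = f * pair α X)
    -- h symmetric with induced map h♯, non-degenerate with inverse g♭ = (h♯)^{-1}
    (hsym : ∀ α β, h α β = h β α)
    (hhs : ∀ α β, pair α (hs β) = h α β)
    (hhs_add : ∀ α β, hs (α + β) = hs α + hs β)
    (hhs_smul : ∀ (f : R) α, hs (f • α) = f • hs α)
    (hgf1 : ∀ α, gflat (hs α) = α)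
    (hgf2 : ∀ X, hs (gflat X) = X)
    -- (h,E) is a Jacobi-Koszul-Vinberg structure: axioms (i), (ii), (iii)
    (hJKV1 : ∀ α β γ, nablah ρ connd h (hs α) β γ - pair α E * h β γ
        = nablah ρ connd h (hs β) α γ - pair β E * h α γ)
    (hJKV2 : ∀ β γ, nablah ρ connd h E β γ - pair γ (conn (hs β) E)
        + pair β E * pair γ E = 0)
    (hJKV3 : conn E E = 0) :
    -- (M,∇,g,θ = g♭E) is a semi-Weyl manifold
    ∀ X Y Z,
      nablag ρ conn pair gflat X Y Z + pair (gflat E) X * pair (gflat Y) Z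
        = nablag ρ conn pair gflat Y X Z + pair (gflat E) Y * pair (gflat X) Z := by
  intro X Y Z
  have spair : ∀ V W, pair (gflat V) W = pair (gflat W) V := by
    intro V W
    rw [← hgf2 W, hhs, hsym, ← hhs, hgf1, hgf2]
  have key := hJKV1 (gflat X) (gflat Y) (gflat Z)
  simp only [nablah, hgf2] at key
  rw [hsym (gflat Y) (connd X (gflat Z)), hsym (gflat X) (connd Y (gflat Z))] at key
  simp only [← hhs, hgf2, hconnd] at key
  rw [spair Z Y, spair Z (conn X Y), spair Z X, spair Z (conn Y X),
    spair X E, spair Y E] at key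
  simp only [nablag]
  linear_combination -key
end

section
/- Let (M, ∇, h, E) be a Jacobi-Koszul-Vinberg manifold with h non-degenerate, g the corresponding metric and θ = g♭E. Then dθ = 0. Hence (M,∇,g,θ) is a locally conformally Hessian manifold. -/
/-- Algebraic model: a Jacobi-Koszul-Vinberg manifold `(M,∇,h,E)` (`∇` torsion-free flat,
`(h,E)` satisfying axioms (i),(ii),(iii)) with `h` non-degenerate, `g` the metric with
`g♭ = (h♯)^{-1}`, and `θ = g♭E`.  Then `dθ = 0`, i.e.
`X⟨θ,Y⟩ − Y⟨θ,X⟩ − ⟨θ,[X,Y]⟩ = 0` with `[X,Y] = ∇_X Y − ∇_Y X`; hence `(M,∇,g,θ)` is a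
locally conformally Hessian manifold. -/
theorem stmt15
    (R : Type*) [CommRing R] (ΓX : Type*) [AddCommGroup ΓX] [Module R ΓX]
    (ΓXd : Type*) [AddCommGroup ΓXd] [Module R ΓXd]
    (ρ : ΓX → R → R) (conn : ΓX → ΓX → ΓX) (connd : ΓX → ΓXd → ΓXd)
    (pair : ΓXd → ΓX → R) (h : ΓXd → ΓXd → R) (hs : ΓXd → ΓX) (gflat : ΓX → ΓXd)
    (E : ΓX)
    -- vector fields act as derivations on functions
    (hρ_add : ∀ X f g, ρ X (f + g) = ρ X f + ρ X g)
    (hρ_mul : ∀ X f g, ρ X (f * g) = f * ρ X g + g * ρ X f)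
    (hρ_addX : ∀ X Y g, ρ (X + Y) g = ρ X g + ρ Y g)
    (hρ_smul : ∀ (f : R) X g, ρ (f • X) g = f * ρ X g)
    -- ∇ is an affine connection, flat (torsion-free via the bracket ∇XY−∇YX)
    (hconn_addl : ∀ X Y Z, conn (X + Y) Z = conn X Z + conn Y Z)
    (hconn_addr : ∀ X Y Z, conn X (Y + Z) = conn X Y + conn X Z)
    (hconn_smull : ∀ (f : R) X Y, conn (f • X) Y = f • conn X Y)
    (hconn_smulr : ∀ (f : R) X Y, conn X (f • Y) = f • conn X Y + ρ X f • Y)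
    (hflat : ∀ X Y Z, conn X (conn Y Z) - conn Y (conn X Z) = conn (conn X Y - conn Y X) Z)
    -- the induced connection on 1-forms
    (hconnd : ∀ X α Y, pair (connd X α) Y = ρ X (pair α Y) - pair α (conn X Y))
    -- pairing axioms
    (hpair_addl : ∀ α β X, pair (α + β) X = pair α X + pair β X)
    (hpair_addr : ∀ α X Y, pair α (X + Y) = pair α X + pair α Y)
    (hpair_smull : ∀ (f : R) α X, pair (f • α) X = f * pair α X)
    (hpair_smulr : ∀ (f : R) α X, pair α (f • X) = f * pair α X)
    -- h symmetric with induced map h♯, non-degenerate with inverse g♭ = (h♯)^{-1}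
    (hsym : ∀ α β, h α β = h β α)
    (hhs : ∀ α β, pair α (hs β) = h α β)
    (hhs_add : ∀ α β, hs (α + β) = hs α + hs β)
    (hhs_smul : ∀ (f : R) α, hs (f • α) = f • hs α)
    (hgf1 : ∀ α, gflat (hs α) = α)
    (hgf2 : ∀ X, hs (gflat X) = X)
    -- (h,E) is a Jacobi-Koszul-Vinberg structure: axioms (i), (ii), (iii)
    (hJKV1 : ∀ α β γ, nablah ρ connd h (hs α) β γ - pair α E * h β γ
        = nablah ρ connd h (hs β) α γ - pair β E * h α γ)
    (hJKV2 : ∀ β γ, nablah ρ connd h E β γ - pair γ (conn (hs β) E)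
        + pair β E * pair γ E = 0)
    (hJKV3 : conn E E = 0) :
    -- dθ = 0 for θ = g♭E
    ∀ X Y,
      ρ X (pair (gflat E) Y) - ρ Y (pair (gflat E) X)
        - pair (gflat E) (conn X Y - conn Y X) = 0 := by
  intro X Y
  have gsym : ∀ A B, pair (gflat A) B = pair (gflat B) A := by
    intro A B
    conv_lhs => rw [← hgf2 B]
    rw [hhs, hsym, ← hhs, hgf2]
  have psub : ∀ α A B, pair α (A - B) = pair α A - pair α B := by
    intro α A B
    have h1 := hpair_addr α (A - B) B
    rw [sub_add_cancel] at h1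
    linear_combination -h1
  have hAB : ∀ A B, h (gflat A) (gflat B) = pair (gflat A) B := by
    intro A B; rw [← hhs, hgf2]
  have hnd : ∀ Z A B, h (connd Z (gflat A)) (gflat B)
      = ρ Z (pair (gflat A) B) - pair (gflat A) (conn Z B) := by
    intro Z A B; rw [← hhs, hgf2, hconnd]
  have hhg : ∀ Z A B, nablah ρ connd h Z (gflat A) (gflat B)
      = pair (gflat A) (conn Z B) + pair (gflat B) (conn Z A) - ρ Z (pair (gflat A) B) := by
    intro Z A B
    simp only [nablah]
    rw [hAB, hsym (gflat A) (connd Z (gflat B)), hnd, hnd, gsym B A]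
    ring
  have hBeq : ∀ A B, pair (gflat B) (conn A E)
      = nablah ρ connd h E (gflat A) (gflat B) + pair (gflat A) E * pair (gflat B) E := by
    intro A B
    have h2 := hJKV2 (gflat A) (gflat B)
    rw [hgf2] at h2
    linear_combination -h2
  have hBsym : ∀ A B, pair (gflat B) (conn A E) = pair (gflat A) (conn B E) := by
    intro A B
    rw [hBeq, hBeq, hhg, hhg, gsym B A]
    ring
  have keyh := hJKV1 (gflat X) (gflat Y) (gflat E)
  rw [hgf2, hgf2, hhg, hhg, hAB, hAB] at keyh
  rw [gsym E Y, gsym E X]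
  linear_combination hBsym X Y - keyh - psub (gflat E) (conn X Y) (conn Y X)
end

section
/- Let (M,g) be a pseudo-Riemannian manifold with torsion-free affine connection ∇, let h be the non-degenerate symmetric (2,0)-tensor with h♯ = (g♭)^{-1}. Then h satisfies the Codazzi equation (∇_{h♯α}h)(β,γ) = (∇_{h♯β}h)(α,γ) for all 1-forms α,β,γ if and only if ∇g is symmetric, i.e. (∇_X g)(Y,Z) = (∇_Y g)(X,Z) for all vector fields X,Y,Z. -/
/-- Algebraic model: `(M,g)` a pseudo-Riemannian manifold with torsion-free affine connection
`∇`, `g♭` the musical isomorphism, `h♯ = (g♭)^{-1}` and `h(α,β) = ⟨α,h♯β⟩`.  Then `h`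
satisfies the Codazzi equation `(∇_{h♯α}h)(β,γ) = (∇_{h♯β}h)(α,γ)` for all 1-forms `α,β,γ`
iff `∇g` is symmetric: `(∇_X g)(Y,Z) = (∇_Y g)(X,Z)` for all vector fields `X,Y,Z`. -/
theorem stmt16
    (R : Type*) [CommRing R] (ΓX : Type*) [AddCommGroup ΓX] [Module R ΓX]
    (ΓXd : Type*) [AddCommGroup ΓXd] [Module R ΓXd]
    (ρ : ΓX → R → R) (br : ΓX → ΓX → ΓX) (conn : ΓX → ΓX → ΓX) (connd : ΓX → ΓXd → ΓXd)
    (pair : ΓXd → ΓX → R) (gflat : ΓX → ΓXd) (hs : ΓXd → ΓX)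
    -- vector fields act as derivations on functions
    (hρ_add : ∀ X f g, ρ X (f + g) = ρ X f + ρ X g)
    (hρ_mul : ∀ X f g, ρ X (f * g) = f * ρ X g + g * ρ X f)
    (hρ_addX : ∀ X Y g, ρ (X + Y) g = ρ X g + ρ Y g)
    (hρ_smul : ∀ (f : R) X g, ρ (f • X) g = f * ρ X g)
    -- ∇ is a torsion-free affine connection
    (hconn_addl : ∀ X Y Z, conn (X + Y) Z = conn X Z + conn Y Z)
    (hconn_addr : ∀ X Y Z, conn X (Y + Z) = conn X Y + conn X Z)
    (hconn_smull : ∀ (f : R) X Y, conn (f • X) Y = f • conn X Y)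
    (hconn_smulr : ∀ (f : R) X Y, conn X (f • Y) = f • conn X Y + ρ X f • Y)
    (htf : ∀ X Y, conn X Y - conn Y X = br X Y)
    -- the induced connection on 1-forms (∇ acting dually)
    (hconnd : ∀ X α Y, pair (connd X α) Y = ρ X (pair α Y) - pair α (conn X Y))
    -- pairing axioms
    (hpair_addl : ∀ α β X, pair (α + β) X = pair α X + pair β X)
    (hpair_addr : ∀ α X Y, pair α (X + Y) = pair α X + pair α Y)
    (hpair_smull : ∀ (f : R) α X, pair (f • α) X = f * pair α X)
    (hpair_smulr : ∀ (f : R) α X, pair α (f • X) = f * pair α X)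
    -- g is symmetric and non-degenerate: g♭ with inverse h♯ = (g♭)^{-1}
    (hgsym : ∀ X Y, pair (gflat X) Y = pair (gflat Y) X)
    (hgf_add : ∀ X Y, gflat (X + Y) = gflat X + gflat Y)
    (hgf_smul : ∀ (f : R) X, gflat (f • X) = f • gflat X)
    (hgf1 : ∀ α, gflat (hs α) = α)
    (hgf2 : ∀ X, hs (gflat X) = X) :
    -- h(α,β) := ⟨α, h♯β⟩ satisfies the Codazzi equation iff ∇g is symmetric
    (∀ α β γ,
      nablah ρ connd (fun α β => pair α (hs β)) (hs α) β γ
        = nablah ρ connd (fun α β => pair α (hs β)) (hs β) α γ)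
    ↔ (∀ X Y Z, nablag ρ conn pair gflat X Y Z = nablag ρ conn pair gflat Y X Z) := by

  have key : ∀ X A B, nablah ρ connd (fun α β => pair α (hs β)) X (gflat A) (gflat B)
      = - nablag ρ conn pair gflat X A B := by
    intro X A B
    have h3 : pair (gflat A) (hs (connd X (gflat B)))
        = pair (connd X (gflat B)) A := by
      rw [hgsym, hgf1]
    simp only [nablah, nablag, hgf2, hconnd, h3, hgsym (conn X A) B,
      hgsym A B]
    ring
  constructor
  · intro H X Y Z
    have := H (gflat X) (gflat Y) (gflat Z)
    rw [hgf2, hgf2, key, key] at this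
    exact neg_inj.mp this
  · intro H α β γ
    have h1 : α = gflat (hs α) := (hgf1 α).symm
    have h2 : β = gflat (hs β) := (hgf1 β).symm
    have h3 : γ = gflat (hs γ) := (hgf1 γ).symm
    rw [h1, h2, h3, key, key, hgf2, hgf2, H]
end

section
/- Let (A,φ₀) be a Jacobi-left-symmetric algebroid over M. The bundle map Ψ: Ã → Ã, (v,t) ↦ (e^t v, t), intertwines the two left-symmetric algebroid structures on à = A×ℝ: ρ̂^{φ₀}∘Ψ = ρ̄^{φ₀} and Ψ(X̄ ·̄^{φ₀} Ȳ) = Ψ(X̄) ·̂^{φ₀} Ψ(Ȳ), where X̄ ·̂^{φ₀} Ȳ := e^{−t}(X̄·_A Ȳ + ⟨φ₀,X̄⟩(∂Ȳ/∂t − Ȳ)), ρ̂^{φ₀}(X̄) := e^{−t}(ρ_A(X̄) + ⟨φ₀,X̄⟩∂/∂t), X̄ ·̄^{φ₀} Ȳ := X̄·_A Ȳ + ⟨φ₀,X̄⟩∂Ȳ/∂t, and ρ̄^{φ₀}(X̄) := ρ_A(X̄) + ⟨φ₀,X̄⟩∂/∂t. Consequently (Ã,·̂^{φ₀},ρ̂^{φ₀})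 is a left-symmetric algebroid if and only if (Ã,·̄^{φ₀},ρ̄^{φ₀}) is. -/
/-- `X̄ ·̂^{φ₀} Ȳ := e^{−t}(X̄·_A Ȳ + ⟨φ₀,X̄⟩(∂Ȳ/∂t − Ȳ))`, where `v = e^{−t}`. -/
def dotHat {R ΓA : Type*} [CommRing R] [AddCommGroup ΓA] [Module R ΓA]
    (dot : ΓA → ΓA → ΓA) (φ₀ : ΓA → R) (Dt : ΓA → ΓA) (v : R) : ΓA → ΓA → ΓA :=
  fun X Y => v • (dot X Y + φ₀ X • (Dt Y - Y))

/-- `ρ̂^{φ₀}(X̄) := e^{−t}(ρ_A(X̄) + ⟨φ₀,X̄⟩∂/∂t)`, where `v = e^{−t}`. -/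
def rhoHat {R ΓA : Type*} [CommRing R]
    (ρ : ΓA → R → R) (φ₀ : ΓA → R) (dt : R → R) (v : R) : ΓA → R → R :=
  fun X f => v * (ρ X f + φ₀ X * dt f)

/-- Algebraic model: `R = C^∞(M×ℝ)`, `ΓA` = time-dependent sections of a
Jacobi-left-symmetric algebroid `(A,φ₀)` over `M`; `u = e^t`, `v = e^{−t}`.  The bundle map
`Ψ(X̄) = e^t X̄` intertwines the two structures: `ρ̂^{φ₀}∘Ψ = ρ̄^{φ₀}` and
`Ψ(X̄ ·̄^{φ₀} Ȳ) = Ψ(X̄) ·̂^{φ₀} Ψ(Ȳ)`; consequently `(Ã,·̂^{φ₀},ρ̂^{φ₀})` is a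
left-symmetric algebroid iff `(Ã,·̄^{φ₀},ρ̄^{φ₀})` is. -/
theorem stmt17
    (R : Type*) [CommRing R] (ΓA : Type*) [AddCommGroup ΓA] [Module R ΓA]
    (dot : ΓA → ΓA → ΓA) (ρ : ΓA → R → R)
    -- anchor axioms
    (hρ_add : ∀ X f g, ρ X (f + g) = ρ X f + ρ X g)
    (hρ_mul : ∀ X f g, ρ X (f * g) = f * ρ X g + g * ρ X f)
    (hρ_addX : ∀ X Y g, ρ (X + Y) g = ρ X g + ρ Y g)
    (hρ_smul : ∀ (f : R) X g, ρ (f • X) g = f * ρ X g)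
    -- left-symmetric algebroid axioms
    (hdot_addl : ∀ X Y Z, dot (X + Y) Z = dot X Z + dot Y Z)
    (hdot_addr : ∀ X Y Z, dot X (Y + Z) = dot X Y + dot X Z)
    (hdot_smull : ∀ (f : R) X Y, dot (f • X) Y = f • dot X Y)
    (hdot_smulr : ∀ (f : R) X Y, dot X (f • Y) = f • dot X Y + ρ X f • Y)
    (hlsym : ∀ X Y Z, dot (dot X Y) Z - dot X (dot Y Z) = dot (dot Y X) Z - dot Y (dot X Z))
    -- φ₀ with δ_A φ₀ symmetric
    (φ₀ : ΓA → R)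
    (hφ_add : ∀ X Y, φ₀ (X + Y) = φ₀ X + φ₀ Y)
    (hφ_smul : ∀ (f : R) X, φ₀ (f • X) = f * φ₀ X)
    (hδsym : ∀ X Y, ρ X (φ₀ Y) - φ₀ (dot X Y) = ρ Y (φ₀ X) - φ₀ (dot Y X))
    -- ∂/∂t on functions and sections, with dot, ρ, φ₀ t-independent
    (dt : R → R) (Dt : ΓA → ΓA)
    (hdt_add : ∀ f g, dt (f + g) = dt f + dt g)
    (hdt_mul : ∀ f g, dt (f * g) = f * dt g + g * dt f)
    (hDt_add : ∀ X Y, Dt (X + Y) = Dt X + Dt Y)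
    (hDt_smul : ∀ (f : R) X, Dt (f • X) = dt f • X + f • Dt X)
    (hDt_dot : ∀ X Y, Dt (dot X Y) = dot (Dt X) Y + dot X (Dt Y))
    (hdtρ : ∀ X f, dt (ρ X f) = ρ (Dt X) f + ρ X (dt f))
    (hdtφ : ∀ X, dt (φ₀ X) = φ₀ (Dt X))
    -- the functions u = e^t and v = e^{−t}
    (u v : R) (huv : u * v = 1) (hdtu : dt u = u) (hρu : ∀ X, ρ X u = 0) :
    -- ρ̂^{φ₀} ∘ Ψ = ρ̄^{φ₀}
    (∀ X f, rhoHat ρ φ₀ dt v (u • X) f = rhoBar ρ φ₀ dt X f)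
    -- Ψ(X̄ ·̄^{φ₀} Ȳ) = Ψ(X̄) ·̂^{φ₀} Ψ(Ȳ)
    ∧ (∀ X Y, u • dotBar dot φ₀ Dt X Y = dotHat dot φ₀ Dt v (u • X) (u • Y))
    -- (Ã,·̂^{φ₀},ρ̂^{φ₀}) is a left-symmetric algebroid iff (Ã,·̄^{φ₀},ρ̄^{φ₀}) is
    ∧ (((∀ (f : R) X Y, dotHat dot φ₀ Dt v X (f • Y)
            = f • dotHat dot φ₀ Dt v X Y + rhoHat ρ φ₀ dt v X f • Y)
        ∧ (∀ (f : R) X Y, dotHat dot φ₀ Dt v (f • X) Y = f • dotHat dot φ₀ Dt v X Y)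
        ∧ (∀ X Y Z, dotHat dot φ₀ Dt v (dotHat dot φ₀ Dt v X Y) Z
              - dotHat dot φ₀ Dt v X (dotHat dot φ₀ Dt v Y Z)
            = dotHat dot φ₀ Dt v (dotHat dot φ₀ Dt v Y X) Z
              - dotHat dot φ₀ Dt v Y (dotHat dot φ₀ Dt v X Z)))
      ↔ ((∀ (f : R) X Y, dotBar dot φ₀ Dt X (f • Y)
            = f • dotBar dot φ₀ Dt X Y + rhoBar ρ φ₀ dt X f • Y)
        ∧ (∀ (f : R) X Y, dotBar dot φ₀ Dt (f • X) Y = f • dotBar dot φ₀ Dt X Y)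
        ∧ (∀ X Y Z, dotBar dot φ₀ Dt (dotBar dot φ₀ Dt X Y) Z
              - dotBar dot φ₀ Dt X (dotBar dot φ₀ Dt Y Z)
            = dotBar dot φ₀ Dt (dotBar dot φ₀ Dt Y X) Z
              - dotBar dot φ₀ Dt Y (dotBar dot φ₀ Dt X Z)))) := by

  -- basic consequences
  have hdt1 : dt (1:R) = 0 := by
    have h := hdt_mul 1 1
    simp only [one_mul] at h
    linear_combination -h
  have hρ1 : ∀ X, ρ X (1:R) = 0 := by
    intro X
    have h := hρ_mul X 1 1
    simp only [one_mul] at h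
    linear_combination -h
  have hdtv : dt v = -v := by
    have h := hdt_mul u v
    rw [huv, hdt1, hdtu] at h
    -- 0 = u * dt v + v * u
    have h2 : dt v = (u * v) * dt v := by rw [huv, one_mul]
    rw [h2]
    linear_combination (-v) * h + (-v) * huv
  have hρv : ∀ X, ρ X v = 0 := by
    intro X
    have h := hρ_mul X u v
    rw [huv, hρ1, hρu] at h
    -- 0 = u * ρ X v + v * 0
    have h2 : ρ X v = (u * v) * ρ X v := by rw [huv, one_mul]
    rw [h2]
    linear_combination (-v) * h
  have su : ∀ z : ΓA, u • v • z = z := by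
    intro z; rw [smul_smul, huv, one_smul]
  have sv : ∀ z : ΓA, v • u • z = z := by
    intro z; rw [smul_smul, mul_comm, huv, one_smul]
  -- the two intertwining statements (general form)
  have hrho : ∀ X f, rhoHat ρ φ₀ dt v X f = rhoBar ρ φ₀ dt (v • X) f := by
    intro X f
    simp only [rhoHat, rhoBar, hρ_smul, hφ_smul]
    ring
  have hkey : ∀ X Y, dotHat dot φ₀ Dt v X Y
      = u • dotBar dot φ₀ Dt (v • X) (v • Y) := by
    intro X Y
    simp only [dotHat, dotBar, hdot_smulr, hdot_smull, hφ_smul, hDt_smul, hdtv,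
      hρ_smul, hρv, mul_zero, zero_smul, add_zero]
    match_scalars
    · linear_combination (-u * v * v) * huv + (u * v * v - v) * huv
    · linear_combination (v - v * φ₀ X - u * v * v) * huv + (u * v * v - v) * huv
    · linear_combination (v + v * φ₀ X - u * v * v) * huv + (u * v * v - v) * huv
  -- bar-structure facts
  have bar_leib : ∀ (f : R) X Y, dotBar dot φ₀ Dt X (f • Y)
      = f • dotBar dot φ₀ Dt X Y + rhoBar ρ φ₀ dt X f • Y := by
    intro f X Y
    simp only [dotBar, rhoBar, hdot_smulr, hDt_smul]
    module
  have bar_smull : ∀ (f : R) X Y, dotBar dot φ₀ Dt (f • X) Y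
      = f • dotBar dot φ₀ Dt X Y := by
    intro f X Y
    simp only [dotBar, hdot_smull, hφ_smul]
    module
  have bar_assoc : ∀ X Y Z,
      dotBar dot φ₀ Dt (dotBar dot φ₀ Dt X Y) Z
        - dotBar dot φ₀ Dt X (dotBar dot φ₀ Dt Y Z)
      = (dot (dot X Y) Z - dot X (dot Y Z))
        + (φ₀ (dot X Y) - ρ X (φ₀ Y)) • Dt Z
        - φ₀ Y • dot X (Dt Z) - φ₀ X • dot Y (Dt Z)
        - (φ₀ X * φ₀ Y) • Dt (Dt Z) := by
    intro X Y Z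
    simp only [dotBar, hdot_addl, hdot_addr, hdot_smull, hdot_smulr, hDt_add,
      hDt_smul, hDt_dot, hφ_add, hφ_smul, hdtφ]
    module
  have bar_lsym : ∀ X Y Z,
      dotBar dot φ₀ Dt (dotBar dot φ₀ Dt X Y) Z
        - dotBar dot φ₀ Dt X (dotBar dot φ₀ Dt Y Z)
      = dotBar dot φ₀ Dt (dotBar dot φ₀ Dt Y X) Z
        - dotBar dot φ₀ Dt Y (dotBar dot φ₀ Dt X Z) := by
    intro X Y Z
    rw [bar_assoc, bar_assoc, hlsym X Y Z]
    have e1 : φ₀ (dot X Y) - ρ X (φ₀ Y) = φ₀ (dot Y X) - ρ Y (φ₀ X) := by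
      linear_combination - hδsym X Y
    rw [e1]
    module
  -- hat-structure facts, transported through Ψ
  have hat_leib : ∀ (f : R) X Y, dotHat dot φ₀ Dt v X (f • Y)
      = f • dotHat dot φ₀ Dt v X Y + rhoHat ρ φ₀ dt v X f • Y := by
    intro f X Y
    rw [hkey, hkey, hrho, smul_comm v f Y, bar_leib]
    rw [smul_add, smul_comm u f]
    congr 1
    rw [smul_comm u _ (v • Y), su]
  have hat_smull : ∀ (f : R) X Y, dotHat dot φ₀ Dt v (f • X) Y
      = f • dotHat dot φ₀ Dt v X Y := by
    intro f X Y
    rw [hkey, hkey, smul_comm v f X, bar_smull, smul_comm u f]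
  have hat_lsym : ∀ X Y Z,
      dotHat dot φ₀ Dt v (dotHat dot φ₀ Dt v X Y) Z
        - dotHat dot φ₀ Dt v X (dotHat dot φ₀ Dt v Y Z)
      = dotHat dot φ₀ Dt v (dotHat dot φ₀ Dt v Y X) Z
        - dotHat dot φ₀ Dt v Y (dotHat dot φ₀ Dt v X Z) := by
    intro X Y Z
    rw [hkey X Y, hkey Y Z, hkey Y X, hkey X Z]
    rw [hkey (u • dotBar dot φ₀ Dt (v • X) (v • Y)) Z,
        hkey X (u • dotBar dot φ₀ Dt (v • Y) (v • Z)),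
        hkey (u • dotBar dot φ₀ Dt (v • Y) (v • X)) Z,
        hkey Y (u • dotBar dot φ₀ Dt (v • X) (v • Z))]
    rw [sv, sv, sv, sv, ← smul_sub, ← smul_sub, bar_lsym]
  refine ⟨?_, ?_, ?_⟩
  · intro X f
    rw [hrho, sv]
  · intro X Y
    rw [hkey, sv, sv]
  · exact iff_of_true ⟨hat_leib, hat_smull, hat_lsym⟩ ⟨bar_leib, bar_smull, bar_lsym⟩
end

section
/- Let (A,[·,·]_A,ρ_A) be a Lie algebroid, φ₀ ∈ Γ(A*) with d_A φ₀ = 0, and π ∈ Γ(Λ²A). With π̃ := e^{−t}π on à = A×ℝ with bracket [X̄,Ȳ]̄^{φ₀} = [X̄,Ȳ]_A + ⟨φ₀,X̄⟩∂Ȳ/∂t − ⟨φ₀,Ȳ⟩∂X̄/∂t and anchor ρ̄^{φ₀}(X̄) = ρ_A(X̄) + ⟨φ₀,X̄⟩∂/∂t, one has [π̃,π̃]̄^{φ₀} = e^{−2t}[π,π]_{A,φ₀}. Hence π is a Jacobi structure on (A,φ₀) if and only if π̃ is a Poisson structure on Ã. -/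
/-- The Lie algebroid bracket `[X̄,Ȳ]̄^{φ₀} = [X̄,Ȳ]_A + ⟨φ₀,X̄⟩∂Ȳ/∂t − ⟨φ₀,Ȳ⟩∂X̄/∂t`. -/
def brBar {R ΓA : Type*} [CommRing R] [AddCommGroup ΓA] [Module R ΓA]
    (br : ΓA → ΓA → ΓA) (φ₀ : ΓA → R) (Dt : ΓA → ΓA) : ΓA → ΓA → ΓA :=
  fun X Y => br X Y + φ₀ X • Dt Y - φ₀ Y • Dt X

/-- The Schouten bracket `[π,π]_A` of a bivector `π` on a Lie algebroid, evaluated on three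
cosections: `½[π,π](ξ,η,ζ) = Σ_cyc (⟨ζ,[π♯ξ,π♯η]⟩ − ρ(π♯ξ)π(η,ζ))`. -/
def PiPi {R ΓA ΓAd : Type*} [CommRing R]
    (br : ΓA → ΓA → ΓA) (ρ : ΓA → R → R) (pair : ΓAd → ΓA → R)
    (π : ΓAd → ΓAd → R) (πs : ΓAd → ΓA) : ΓAd → ΓAd → ΓAd → R :=
  fun ξ η ζ =>
    2 * (pair ζ (br (πs ξ) (πs η)) + pair ξ (br (πs η) (πs ζ)) + pair η (br (πs ζ) (πs ξ))
      - ρ (πs ξ) (π η ζ) - ρ (πs η) (π ζ ξ) - ρ (πs ζ) (π ξ η))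

/-- The `φ₀`-Schouten bracket `[π,π]_{A,φ₀} = [π,π]_A + 2 π∧ι_{φ₀}π` evaluated on three
cosections, where `(ι_{φ₀}π)(ξ) = π(φ₀,ξ) = −⟨φ₀,π♯ξ⟩`. -/
def PiPiPhi {R ΓA ΓAd : Type*} [CommRing R]
    (br : ΓA → ΓA → ΓA) (ρ : ΓA → R → R) (pair : ΓAd → ΓA → R)
    (π : ΓAd → ΓAd → R) (πs : ΓAd → ΓA) (φ₀ : ΓA → R) : ΓAd → ΓAd → ΓAd → R :=
  fun ξ η ζ =>
    PiPi br ρ pair π πs ξ η ζ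
      + 2 * (π ξ η * -(φ₀ (πs ζ)) + π η ζ * -(φ₀ (πs ξ)) + π ζ ξ * -(φ₀ (πs η)))

/-- Algebraic model of the Poissonization: `R = C^∞(M×ℝ)`, `ΓA`/`ΓAd` = time-dependent
sections/cosections of a Jacobi algebroid `(A,φ₀)` (Lie algebroid with `d_A φ₀ = 0`) over
`M`, `e = e^{−t}`, and `π ∈ Γ(Λ²A)` extended t-pointwise with `π̃ = e^{−t}π`.  Then
`[π̃,π̃]̄^{φ₀} = e^{−2t}[π,π]_{A,φ₀}`; hence `π` is a Jacobi structure on `(A,φ₀)` iff `π̃`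
is a Poisson structure on `Ã = (A×ℝ, [·,·]̄^{φ₀}, ρ̄^{φ₀})`. -/
theorem stmt18
    (R : Type*) [CommRing R] (ΓA : Type*) [AddCommGroup ΓA] [Module R ΓA]
    (ΓAd : Type*) [AddCommGroup ΓAd] [Module R ΓAd]
    (br : ΓA → ΓA → ΓA) (ρ : ΓA → R → R) (pair : ΓAd → ΓA → R)
    (π : ΓAd → ΓAd → R) (πs : ΓAd → ΓA) (φ₀ : ΓA → R)
    -- anchor axioms
    (hρ_add : ∀ X f g, ρ X (f + g) = ρ X f + ρ X g)
    (hρ_mul : ∀ X f g, ρ X (f * g) = f * ρ X g + g * ρ X f)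
    (hρ_addX : ∀ X Y g, ρ (X + Y) g = ρ X g + ρ Y g)
    (hρ_smul : ∀ (f : R) X g, ρ (f • X) g = f * ρ X g)
    -- Lie algebroid axioms
    (hbr_addl : ∀ X Y Z, br (X + Y) Z = br X Z + br Y Z)
    (hbr_anti : ∀ X Y, br X Y = - br Y X)
    (hbr_jac : ∀ X Y Z, br X (br Y Z) = br (br X Y) Z + br Y (br X Z))
    (hbr_leib : ∀ (f : R) X Y, br X (f • Y) = f • br X Y + ρ X f • Y)
    (hbr_anchor : ∀ X Y f, ρ (br X Y) f = ρ X (ρ Y f) - ρ Y (ρ X f))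
    -- φ₀ is d_A-closed (Jacobi algebroid)
    (hφ_add : ∀ X Y, φ₀ (X + Y) = φ₀ X + φ₀ Y)
    (hφ_smul : ∀ (f : R) X, φ₀ (f • X) = f * φ₀ X)
    (hdφ : ∀ X Y, ρ X (φ₀ Y) - ρ Y (φ₀ X) - φ₀ (br X Y) = 0)
    -- pairing axioms
    (hpair_addl : ∀ α β X, pair (α + β) X = pair α X + pair β X)
    (hpair_addr : ∀ α X Y, pair α (X + Y) = pair α X + pair α Y)
    (hpair_smull : ∀ (f : R) α X, pair (f • α) X = f * pair α X)
    (hpair_smulr : ∀ (f : R) α X, pair α (f • X) = f * pair α X)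
    -- π is a 2-section with induced map π♯ (⟨π♯ξ,η⟩ = π(ξ,η))
    (hπ_anti : ∀ ξ η, π ξ η = -π η ξ)
    (hπs : ∀ ξ η, pair η (πs ξ) = π ξ η)
    (hπs_add : ∀ ξ η, πs (ξ + η) = πs ξ + πs η)
    (hπs_smul : ∀ (f : R) ξ, πs (f • ξ) = f • πs ξ)
    -- ∂/∂t on functions, sections and cosections; br, ρ, φ₀, π are t-independent
    (dt : R → R) (Dt : ΓA → ΓA) (Dtd : ΓAd → ΓAd)
    (hdt_add : ∀ f g, dt (f + g) = dt f + dt g)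
    (hdt_mul : ∀ f g, dt (f * g) = f * dt g + g * dt f)
    (hDt_add : ∀ X Y, Dt (X + Y) = Dt X + Dt Y)
    (hDt_smul : ∀ (f : R) X, Dt (f • X) = dt f • X + f • Dt X)
    (hdt_pair : ∀ α X, dt (pair α X) = pair (Dtd α) X + pair α (Dt X))
    (hDt_br : ∀ X Y, Dt (br X Y) = br (Dt X) Y + br X (Dt Y))
    (hdtρ : ∀ X f, dt (ρ X f) = ρ (Dt X) f + ρ X (dt f))
    (hdtφ : ∀ X, dt (φ₀ X) = φ₀ (Dt X))
    (hDt_πs : ∀ ξ, Dt (πs ξ) = πs (Dtd ξ))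
    -- the function e = e^{−t}
    (e : R) (hdte : dt e = -e) (he : IsUnit e) (hρe : ∀ X, ρ X e = 0) :
    -- [π̃,π̃]̄^{φ₀} = e^{−2t}[π,π]_{A,φ₀}
    (∀ ξ η ζ,
      PiPi (brBar br φ₀ Dt) (rhoBar ρ φ₀ dt) pair
          (fun ξ η => e * π ξ η) (fun ξ => e • πs ξ) ξ η ζ
        = e * e * PiPiPhi br ρ pair π πs φ₀ ξ η ζ)
    -- π is Jacobi on (A,φ₀) iff π̃ is Poisson on Ã
    ∧ ((∀ ξ η ζ, PiPiPhi br ρ pair π πs φ₀ ξ η ζ = 0)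
        ↔ (∀ ξ η ζ,
          PiPi (brBar br φ₀ Dt) (rhoBar ρ φ₀ dt) pair
            (fun ξ η => e * π ξ η) (fun ξ => e • πs ξ) ξ η ζ = 0)) := by
  have hpair_neg : ∀ (α : ΓAd) (X : ΓA), pair α (-X) = - pair α X := by
    intro α X
    have h := hpair_smulr (-1 : R) α X
    simpa using h
  have hpair_sub : ∀ (α : ΓAd) (X Y : ΓA), pair α (X - Y) = pair α X - pair α Y := by
    intro α X Y
    rw [sub_eq_add_neg, hpair_addr, hpair_neg, ← sub_eq_add_neg]
  have hbr2 : ∀ X Y : ΓA, br (e • X) (e • Y) = (e * e) • br X Y := by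
    intro X Y
    rw [hbr_leib, hρ_smul, hρe, mul_zero, zero_smul, add_zero,
      hbr_anti (e • X) Y, hbr_leib, hρe, zero_smul, add_zero,
      hbr_anti X Y, smul_neg, smul_neg, smul_smul]
  have hdtπ : ∀ ξ η, dt (π ξ η) = π ξ (Dtd η) + π (Dtd ξ) η := by
    intro ξ η
    rw [← hπs, hdt_pair, hDt_πs, hπs, hπs]
  have key : ∀ ξ η ζ,
      PiPi (brBar br φ₀ Dt) (rhoBar ρ φ₀ dt) pair
          (fun ξ η => e * π ξ η) (fun ξ => e • πs ξ) ξ η ζ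
        = e * e * PiPiPhi br ρ pair π πs φ₀ ξ η ζ := by
    intro ξ η ζ
    simp only [PiPi, PiPiPhi, brBar, rhoBar, hbr2, hDt_smul, hdte, hφ_smul, hDt_πs,
      hpair_addr, hpair_sub, hpair_smulr, hπs, hρ_smul, hρ_mul, hρe, mul_zero, add_zero,
      hdt_mul, hdtπ]
    linear_combination (2*e*e*φ₀ (πs η)) * hπ_anti ξ ζ
      + (2*e*e*φ₀ (πs ζ)) * hπ_anti η ξ
      + (2*e*e*φ₀ (πs ξ)) * hπ_anti ζ η
      - (2*e*e*φ₀ (πs ξ)) * hπ_anti η (Dtd ζ)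
      - (2*e*e*φ₀ (πs η)) * hπ_anti (Dtd ξ) ζ
      - (2*e*e*φ₀ (πs ζ)) * hπ_anti (Dtd η) ξ
  refine ⟨key, ?_, ?_⟩
  · intro h ξ η ζ
    rw [key, h, mul_zero]
  · intro h ξ η ζ
    have h2 := h ξ η ζ
    rw [key, mul_assoc] at h2
    exact (he.mul_right_eq_zero).mp ((he.mul_right_eq_zero).mp h2)
end

section
/- Let A be a Lie algebroid over M, π ∈ Γ(Λ²A), and φ₀ ∈ Γ(A*) with d_A φ₀ = 0. Define on Γ(A*) the bracket [ξ,η]_{π,φ₀} := L^{A,φ₀}_{π♯ξ}η − L^{A,φ₀}_{π♯η}ξ − d_{A,φ₀}⟨π♯ξ,η⟩, where d_{A,φ₀}ω = d_Aω + φ₀∧ω and L^{A,φ₀}_X = ι_X d_{A,φ₀} + d_{A,φ₀}ι_X. Then π♯[ξ,η]_{π,φ₀} − [π♯ξ, π♯η]_A = −½ [π,π]_{A,φ₀}(ξ,η,·) for all ξ, η ∈ Γ(A*). -/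
/-- Algebraic model: a Lie algebroid `A` over `M`, `φ₀ ∈ Γ(A*)` with `d_A φ₀ = 0`, and
`π ∈ Γ(Λ²A)`.  The bracket
`[ξ,η]_{π,φ₀} = L^{A,φ₀}_{π♯ξ}η − L^{A,φ₀}_{π♯η}ξ − d_{A,φ₀}⟨π♯ξ,η⟩` on cosections
(given here by its pairing with an arbitrary section `Z`, obtained from
`d_{A,φ₀}ω = d_Aω + φ₀∧ω` and the Cartan formula) satisfies
`π♯[ξ,η]_{π,φ₀} − [π♯ξ,π♯η]_A = −½[π,π]_{A,φ₀}(ξ,η,·)`,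
i.e. `2⟨ζ, π♯[ξ,η]_{π,φ₀} − [π♯ξ,π♯η]_A⟩ = −[π,π]_{A,φ₀}(ξ,η,ζ)` for all `ζ`. -/
theorem stmt19
    (R : Type*) [CommRing R] (ΓA : Type*) [AddCommGroup ΓA] [Module R ΓA]
    (ΓAd : Type*) [AddCommGroup ΓAd] [Module R ΓAd]
    (br : ΓA → ΓA → ΓA) (ρ : ΓA → R → R) (pair : ΓAd → ΓA → R)
    (π : ΓAd → ΓAd → R) (πs : ΓAd → ΓA) (φ₀ : ΓA → R)
    (brD : ΓAd → ΓAd → ΓAd)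
    -- anchor axioms
    (hρ_add : ∀ X f g, ρ X (f + g) = ρ X f + ρ X g)
    (hρ_mul : ∀ X f g, ρ X (f * g) = f * ρ X g + g * ρ X f)
    (hρ_addX : ∀ X Y g, ρ (X + Y) g = ρ X g + ρ Y g)
    (hρ_smul : ∀ (f : R) X g, ρ (f • X) g = f * ρ X g)
    -- Lie algebroid axioms
    (hbr_addl : ∀ X Y Z, br (X + Y) Z = br X Z + br Y Z)
    (hbr_anti : ∀ X Y, br X Y = - br Y X)
    (hbr_jac : ∀ X Y Z, br X (br Y Z) = br (br X Y) Z + br Y (br X Z))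
    (hbr_leib : ∀ (f : R) X Y, br X (f • Y) = f • br X Y + ρ X f • Y)
    (hbr_anchor : ∀ X Y f, ρ (br X Y) f = ρ X (ρ Y f) - ρ Y (ρ X f))
    -- φ₀ is d_A-closed
    (hφ_add : ∀ X Y, φ₀ (X + Y) = φ₀ X + φ₀ Y)
    (hφ_smul : ∀ (f : R) X, φ₀ (f • X) = f * φ₀ X)
    (hdφ : ∀ X Y, ρ X (φ₀ Y) - ρ Y (φ₀ X) - φ₀ (br X Y) = 0)
    -- pairing axioms
    (hpair_addl : ∀ α β X, pair (α + β) X = pair α X + pair β X)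
    (hpair_addr : ∀ α X Y, pair α (X + Y) = pair α X + pair α Y)
    (hpair_smull : ∀ (f : R) α X, pair (f • α) X = f * pair α X)
    (hpair_smulr : ∀ (f : R) α X, pair α (f • X) = f * pair α X)
    -- π is a 2-section with induced map π♯ (⟨π♯ξ,η⟩ = π(ξ,η))
    (hπ_anti : ∀ ξ η, π ξ η = -π η ξ)
    (hπs : ∀ ξ η, pair η (πs ξ) = π ξ η)
    (hπs_add : ∀ ξ η, πs (ξ + η) = πs ξ + πs η)
    (hπs_smul : ∀ (f : R) ξ, πs (f • ξ) = f • πs ξ)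
    -- defining property of [ξ,η]_{π,φ₀} = L^{A,φ₀}_{π♯ξ}η − L^{A,φ₀}_{π♯η}ξ − d_{A,φ₀}π(ξ,η)
    (hbrD : ∀ ξ η Z, pair (brD ξ η) Z
        = (ρ (πs ξ) (pair η Z) - pair η (br (πs ξ) Z) + φ₀ (πs ξ) * pair η Z)
          - (ρ (πs η) (pair ξ Z) - pair ξ (br (πs η) Z) + φ₀ (πs η) * pair ξ Z)
          - (ρ Z (π ξ η) + π ξ η * φ₀ Z)) :
    ∀ ξ η ζ,
      2 * pair ζ (πs (brD ξ η) - br (πs ξ) (πs η))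
        = -PiPiPhi br ρ pair π πs φ₀ ξ η ζ := by
  have hpair_neg : ∀ α X, pair α (-X) = - pair α X := by
    intro α X
    rw [← neg_one_smul R X, hpair_smulr]; ring
  have hpair_sub : ∀ α X Y, pair α (X - Y) = pair α X - pair α Y := by
    intro α X Y
    rw [sub_eq_add_neg, hpair_addr, hpair_neg]; ring
  have hρ_zero : ∀ X, ρ X 0 = 0 := by
    intro X
    have := hρ_mul X 0 0
    simpa using this
  have hρ_neg : ∀ X f, ρ X (-f) = - ρ X f := by
    intro X f
    have h := hρ_add X f (-f)
    rw [add_neg_cancel, hρ_zero] at h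
    linear_combination -h
  intro ξ η ζ
  rw [hpair_sub]
  have h1 : pair ζ (πs (brD ξ η)) = - pair (brD ξ η) (πs ζ) := by
    rw [hπs, hπ_anti, ← hπs]
  rw [h1, hbrD]
  have h2 : pair η (br (πs ξ) (πs ζ)) = - pair η (br (πs ζ) (πs ξ)) := by
    rw [hbr_anti (πs ξ), hpair_neg]
  rw [h2, hπs ζ η, hπs ζ ξ, hπ_anti ζ η, hρ_neg]
  simp only [PiPiPhi, PiPi]
  rw [hπ_anti ζ ξ, hρ_neg]
  ring
end
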